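/- arXiv:1812.03059 — 2 statements merged into one kernel-verified Lean document; each statement's English description precedes it below -/
import Mathlib

section
/- Suppose p ≠ √2−1 (equivalently p²+2p−1 ≠ 0). Then for every n ≥ 1 and every integer x with L ≤ x ≤ U (where U−L ≥ 4), E[τ_n^x] ≤ 1 + (2·max{|L|,|U|} + 2|p−q| + |2p−q|)/|p²+2p−1|. -/
/-!
Write `μ = p² + 2p - 1`. The process `M_k = S_k + p·1{k ≥ 1, ξ_k = 1} - μk` is a martingale:
its increment is `(1{ξ_{k+1} = 1} - p)(2 + p + 1{ξ_k = 1})`, a centred variable independent of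
the past times a function of the past. Optional stopping at the bounded time `τ_n` gives
`μ·E[τ_n] = E[S_{τ_n} + p·1{ξ_{τ_n} = 1}]`. A ladder step overshoots by at most one, so the
integrand lies in `[L - x, U - L + p]`; hence `|μ|·E[τ_n] ≤ U - L + p`, which the stated bound
dominates.
-/

open MeasureTheory ProbabilityTheory Filter
open scoped ENNReal Classical

noncomputable section

variable {Ω : Type*} [MeasurableSpace Ω]

/-- The `k`-th step of the ladder chain `L(2,2,p)` built from the driving
sequence `ξ` (indexed from 1): `X₁ = ±1` according to `ξ₁`, and for `k ≥ 2`,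
`X_k = -1` if `ξ_k = -1`, `X_k = 2` if `ξ_k = ξ_{k-1} = 1`, and `X_k = 1`
if `ξ_k = 1, ξ_{k-1} = -1`. -/
def ladderX (ξ : ℕ → Ω → ℤ) (k : ℕ) (ω : Ω) : ℤ :=
  if k = 1 then (if ξ 1 ω = 1 then 1 else -1)
  else if ξ k ω = -1 then -1
  else if ξ (k - 1) ω = 1 then 2 else 1

/-- The ladder chain `S_n = X₁ + ⋯ + X_n` (with `S_0 = 0`). -/
def ladderS (ξ : ℕ → Ω → ℤ) (n : ℕ) (ω : Ω) : ℤ :=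
  ∑ k ∈ Finset.Icc 1 n, ladderX ξ k ω

/-- The truncated exit time `τ_k^x`: the least `l ≤ k` with `S_l^x ≤ L` or
`S_l^x ≥ U`, and `k` if there is no such `l`. -/
def ladderTau (ξ : ℕ → Ω → ℤ) (L U x : ℤ) (k : ℕ) (ω : Ω) : ℕ :=
  if ∃ l ≤ k, (x + ladderS ξ l ω ≤ L ∨ U ≤ x + ladderS ξ l ω)
  then sInf {l | l ≤ k ∧ (x + ladderS ξ l ω ≤ L ∨ U ≤ x + ladderS ξ l ω)}
  else k

section Path

variable {α : Type*} {ξ : ℕ → α → ℤ} {L U x : ℤ}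

def ladderExitsAt (ξ : ℕ → α → ℤ) (L U x : ℤ) (l : ℕ) (ω : α) : Prop :=
  x + ladderS ξ l ω ≤ L ∨ U ≤ x + ladderS ξ l ω

def ladderAlive (ξ : ℕ → α → ℤ) (L U x : ℤ) (n : ℕ) : Set α :=
  {ω | ∀ l ≤ n, ¬ ladderExitsAt ξ L U x l ω}

lemma ladderS_zero (ω : α) : ladderS ξ 0 ω = 0 := by
  simp [ladderS]

lemma ladderS_succ (n : ℕ) (ω : α) :
    ladderS ξ (n + 1) ω = ladderS ξ n ω + ladderX ξ (n + 1) ω :=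
  Finset.sum_Icc_succ_top (by omega) _

lemma ladderX_bounds (k : ℕ) (ω : α) : -1 ≤ ladderX ξ k ω ∧ ladderX ξ k ω ≤ 2 := by
  unfold ladderX
  split_ifs <;> omega

lemma ladderTau_eq_self {k : ℕ} {ω : α} (h : ∀ l < k, ¬ ladderExitsAt ξ L U x l ω) :
    ladderTau ξ L U x k ω = k := by
  unfold ladderTau
  split_ifs with hex
  · obtain ⟨l, hlk, hl⟩ := hex
    refine le_antisymm (le_trans (Nat.sInf_le ⟨hlk, hl⟩) hlk) (le_csInf ⟨l, hlk, hl⟩ ?_)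
    exact fun j hj => not_lt.1 fun hjk => h j hjk hj.2
  · rfl

lemma ladderTau_eq_of_exitsAt {k l : ℕ} {ω : α} (hlk : l ≤ k)
    (hl : ladderExitsAt ξ L U x l ω)
    (hmin : ∀ j < l, ¬ ladderExitsAt ξ L U x j ω) : ladderTau ξ L U x k ω = l := by
  unfold ladderTau
  rw [if_pos ⟨l, hlk, hl⟩]
  exact le_antisymm (Nat.sInf_le ⟨hlk, hl⟩)
    (le_csInf ⟨l, hlk, hl⟩ fun j hj => not_lt.1 fun hjl => hmin j hjl hj.2)

lemma not_exitsAt_of_lt_ladderTau {k l : ℕ} {ω : α} (h : l < ladderTau ξ L U x k ω) :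
    ¬ ladderExitsAt ξ L U x l ω := by
  unfold ladderTau at h
  split_ifs at h with hex
  · exact fun hl => not_le.2 h (Nat.sInf_le ⟨(h.trans_le (Nat.sInf_mem hex).1).le, hl⟩)
  · exact fun hl => hex ⟨l, h.le, hl⟩

lemma ladderTau_zero (ω : α) : ladderTau ξ L U x 0 ω = 0 :=
  ladderTau_eq_self fun _ h => absurd h (Nat.not_lt_zero _)

lemma ladderTau_succ_of_notMem {n : ℕ} {ω : α} (h : ω ∉ ladderAlive ξ L U x n) :
    ladderTau ξ L U x (n + 1) ω = ladderTau ξ L U x n ω := by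
  have hex : ∃ l, l ≤ n ∧ ladderExitsAt ξ L U x l ω := by
    simpa [ladderAlive] using h
  have hmin : ∀ j < Nat.find hex, ¬ ladderExitsAt ξ L U x j ω := fun j hj hexit =>
    Nat.find_min hex hj ⟨(hj.trans_le (Nat.find_spec hex).1).le, hexit⟩
  rw [ladderTau_eq_of_exitsAt (Nat.find_spec hex).1 (Nat.find_spec hex).2 hmin,
    ladderTau_eq_of_exitsAt ((Nat.find_spec hex).1.trans n.le_succ) (Nat.find_spec hex).2 hmin]

lemma comp_ladderTau_succ (f : ℕ → α → ℝ) (n : ℕ) (ω : α) :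
    f (ladderTau ξ L U x (n + 1) ω) ω = f (ladderTau ξ L U x n ω) ω
      + (ladderAlive ξ L U x n).indicator (fun ω => f (n + 1) ω - f n ω) ω := by
  by_cases h : ω ∈ ladderAlive ξ L U x n
  · rw [ladderTau_eq_self (k := n + 1) fun l hl => h l (by omega),
      ladderTau_eq_self (k := n) fun l hl => h l hl.le, Set.indicator_of_mem h]
    ring
  · rw [ladderTau_succ_of_notMem h, Set.indicator_of_notMem h, add_zero]

lemma ladderS_ladderTau_bounds (hxL : L ≤ x) (hxU : x ≤ U) (n : ℕ) (ω : α) :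
    L - x ≤ ladderS ξ (ladderTau ξ L U x n ω) ω ∧
      ladderS ξ (ladderTau ξ L U x n ω) ω ≤ U - L := by
  cases hτ : ladderTau ξ L U x n ω with
  | zero =>
    rw [ladderS_zero]
    omega
  | succ m =>
    have hstart : ¬ ladderExitsAt ξ L U x 0 ω := not_exitsAt_of_lt_ladderTau (k := n) (by omega)
    have hprev : ¬ ladderExitsAt ξ L U x m ω := not_exitsAt_of_lt_ladderTau (k := n) (by omega)
    simp only [ladderExitsAt, ladderS_zero, not_or, not_le] at hstart hprev
    have := ladderX_bounds (ξ := ξ) (m + 1) ω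
    rw [ladderS_succ]
    omega

end Path

section Compensator

variable {α : Type*} {ξ : ℕ → α → ℤ}

def ladderUp (ξ : ℕ → α → ℤ) (k : ℕ) : α → ℝ :=
  if k = 0 then 0 else {ω | ξ k ω = 1}.indicator 1

def ladderMartingale (p : ℝ) (ξ : ℕ → α → ℤ) (k : ℕ) (ω : α) : ℝ :=
  ladderS ξ k ω + p * ladderUp ξ k ω - (p ^ 2 + 2 * p - 1) * k

lemma ladderUp_succ (k : ℕ) : ladderUp ξ (k + 1) = {ω | ξ (k + 1) ω = 1}.indicator 1 :=
  if_neg k.succ_ne_zero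

lemma ladderUp_mem (k : ℕ) (ω : α) : ladderUp ξ k ω = 0 ∨ ladderUp ξ k ω = 1 := by
  unfold ladderUp
  split_ifs
  · exact Or.inl rfl
  · exact Set.indicator_eq_zero_or_self _ _ _

lemma ladderMartingale_zero (p : ℝ) (ω : α) : ladderMartingale p ξ 0 ω = 0 := by
  simp [ladderMartingale, ladderUp, ladderS_zero]

lemma ladderMartingale_succ_sub (p : ℝ) {k : ℕ} {ω : α}
    (h : ξ (k + 1) ω = 1 ∨ ξ (k + 1) ω = -1) :
    ladderMartingale p ξ (k + 1) ω - ladderMartingale p ξ k ω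
      = (ladderUp ξ (k + 1) ω - p) * (2 + p + ladderUp ξ k ω) := by
  simp only [ladderMartingale, ladderS_succ, ladderUp_succ]
  rcases k.eq_zero_or_pos with rfl | hk
  · by_cases h1 : ξ 1 ω = 1 <;> simp [ladderX, ladderUp, h1] <;> ring
  · have hX : ladderX ξ (k + 1) ω
        = if ξ (k + 1) ω = -1 then -1 else if ξ k ω = 1 then 2 else 1 := by
      simp [ladderX, hk.ne']
    have hUp : ladderUp ξ k ω = {ω | ξ k ω = 1}.indicator 1 ω := by
      simp [ladderUp, hk.ne']
    rw [hX, hUp]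
    rcases h with h | h <;> by_cases h' : ξ k ω = 1 <;> simp [h, h'] <;> ring

end Compensator

section Measurability

variable {α : Type*} {ξ : ℕ → α → ℤ} {m : MeasurableSpace α}

lemma measurable_ladderX {k : ℕ} (hξ : ∀ i ≤ k, Measurable[m] (ξ i)) :
    Measurable[m] (ladderX ξ k) := by
  unfold ladderX
  by_cases hk : k = 1
  · subst hk
    simp only [if_true]
    exact Measurable.ite ((hξ 1 le_rfl) (measurableSet_singleton 1)) measurable_const
      measurable_const
  · simp only [hk, if_false]
    exact Measurable.ite ((hξ k le_rfl) (measurableSet_singleton (-1))) measurable_const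
      (Measurable.ite ((hξ (k - 1) (Nat.sub_le k 1)) (measurableSet_singleton 1))
        measurable_const measurable_const)

lemma measurable_ladderS {n : ℕ} (hξ : ∀ i ≤ n, Measurable[m] (ξ i)) :
    Measurable[m] (ladderS ξ n) :=
  Finset.measurable_fun_sum _ fun _ hk =>
    measurable_ladderX fun i hi => hξ i (hi.trans (Finset.mem_Icc.1 hk).2)

lemma measurableSet_ladderAlive {L U x : ℤ} {n : ℕ} (hξ : ∀ i ≤ n, Measurable[m] (ξ i)) :
    MeasurableSet[m] (ladderAlive ξ L U x n) := by
  refine Measurable.setOf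
    (Measurable.forall fun l => Measurable.forall fun hl => Measurable.not ?_)
  exact measurableSet_setOfPred.1
    ((measurable_ladderS fun i hi => hξ i (hi.trans hl))
      (MeasurableSet.of_discrete (s := {z | x + z ≤ L ∨ U ≤ x + z})))

lemma measurable_ladderUp {k : ℕ} (hξ : Measurable[m] (ξ k)) :
    Measurable[m] (ladderUp ξ k) := by
  unfold ladderUp
  split_ifs
  · exact measurable_const
  · exact measurable_const.indicator (hξ (measurableSet_singleton 1))

lemma measurable_comap_restrict {ι β : Type*} [MeasurableSpace β] (f : ι → α → β)
    (S : Finset ι) {i : ι} (hi : i ∈ S) :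
    Measurable[MeasurableSpace.comap (fun ω (j : S) => f j ω) inferInstance] (f i) :=
  (measurable_pi_apply (⟨i, hi⟩ : S)).comp (comap_measurable (fun ω (j : S) => f j ω))

end Measurability

lemma indepFun_of_measurable_comap {β γ δ ε : Type*} [MeasurableSpace β] [MeasurableSpace γ]
    [MeasurableSpace δ] [MeasurableSpace ε] {P : Measure Ω} {F : Ω → β} {G : Ω → γ}
    {f : Ω → δ} {g : Ω → ε} (hFG : IndepFun F G P)
    (hf : Measurable[MeasurableSpace.comap F inferInstance] f)
    (hg : Measurable[MeasurableSpace.comap G inferInstance] g) : IndepFun f g P := by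
  rw [IndepFun_iff_Indep] at hFG ⊢
  exact indep_of_indep_of_le_left (indep_of_indep_of_le_right hFG hg.comap_le) hf.comap_le

section Probability

variable {ξ : ℕ → Ω → ℤ} {L U x : ℤ} {P : Measure Ω}

lemma integrable_ladderS [IsFiniteMeasure P] (hmeas : ∀ i, Measurable (ξ i)) (n : ℕ) :
    Integrable (fun ω => (ladderS ξ n ω : ℝ)) P := by
  simp only [ladderS, Int.cast_sum]
  refine integrable_finsetSum _ fun k _ => Integrable.of_bound ?_ 2 (ae_of_all _ fun ω => ?_)
  · exact ((Measurable.of_discrete (f := ((↑) : ℤ → ℝ))).comp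
      (measurable_ladderX fun i _ => hmeas i)).aestronglyMeasurable
  · have := ladderX_bounds (ξ := ξ) k ω
    rw [Real.norm_eq_abs, abs_le]
    constructor <;> norm_cast <;> omega

lemma integrable_ladderUp [IsFiniteMeasure P] (hmeas : ∀ i, Measurable (ξ i)) (k : ℕ) :
    Integrable (ladderUp ξ k) P := by
  unfold ladderUp
  split_ifs
  · exact integrable_zero _ _ _
  · exact (integrable_const 1).indicator ((hmeas k) (measurableSet_singleton 1))

lemma integrable_ladderMartingale [IsFiniteMeasure P] (hmeas : ∀ i, Measurable (ξ i)) (p : ℝ)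
    (k : ℕ) :
    Integrable (ladderMartingale p ξ k) P :=
  ((integrable_ladderS hmeas k).add ((integrable_ladderUp hmeas k).const_mul p)).sub
    (integrable_const _)

lemma integrable_comp_ladderTau {f : ℕ → Ω → ℝ} (hmeas : ∀ i, Measurable (ξ i))
    (hf : ∀ k, Integrable (f k) P) (n : ℕ) :
    Integrable (fun ω => f (ladderTau ξ L U x n ω) ω) P := by
  induction n with
  | zero => simpa only [ladderTau_zero] using hf 0
  | succ n ih =>
    simp_rw [comp_ladderTau_succ f n]
    exact ih.add (((hf (n + 1)).sub (hf n)).indicator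
      (measurableSet_ladderAlive fun i _ => hmeas i))

lemma integral_comp_ladderTau_succ {f : ℕ → Ω → ℝ} (hmeas : ∀ i, Measurable (ξ i))
    (hf : ∀ k, Integrable (f k) P) (n : ℕ) :
    ∫ ω, f (ladderTau ξ L U x (n + 1) ω) ω ∂P = ∫ ω, f (ladderTau ξ L U x n ω) ω ∂P
      + ∫ ω, (ladderAlive ξ L U x n).indicator (fun ω => f (n + 1) ω - f n ω) ω ∂P := by
  simp_rw [comp_ladderTau_succ f n]
  exact integral_add (integrable_comp_ladderTau hmeas hf n)
    (((hf (n + 1)).sub (hf n)).indicator (measurableSet_ladderAlive fun i _ => hmeas i))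

lemma integral_mul_ladderUp_sub_eq_zero {p : ℝ} (hp : 0 ≤ p) (hmeas : ∀ i, Measurable (ξ i))
    (hindep : iIndepFun ξ P) {n : ℕ} (hprob : P {ω | ξ (n + 1) ω = 1} = ENNReal.ofReal p)
    {g : Ω → ℝ} (hg : Measurable[MeasurableSpace.comap
      (fun ω (i : Finset.range (n + 1)) => ξ i ω) inferInstance] g) :
    ∫ ω, g ω * (ladderUp ξ (n + 1) ω - p) ∂P = 0 := by
  have := hindep.isProbabilityMeasure
  have hup : Measurable[MeasurableSpace.comap
      (fun ω (i : ({n + 1} : Finset ℕ)) => ξ i ω) inferInstance]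
      (fun ω => ladderUp ξ (n + 1) ω - p) :=
    (measurable_ladderUp (measurable_comap_restrict ξ _ (Finset.mem_singleton_self _))).sub_const p
  have hind : IndepFun g (fun ω => ladderUp ξ (n + 1) ω - p) P :=
    indepFun_of_measurable_comap
      (hindep.indepFun_finset (Finset.range (n + 1)) {n + 1} (by simp) hmeas) hg hup
  have hpast := measurable_pi_lambda (fun ω (i : Finset.range (n + 1)) => ξ i ω) fun i => hmeas i
  have hnext :=
    measurable_pi_lambda (fun ω (i : ({n + 1} : Finset ℕ)) => ξ i ω) fun i => hmeas i
  rw [hind.integral_fun_mul_eq_mul_integral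
      (hg.mono hpast.comap_le le_rfl).aestronglyMeasurable
      (hup.mono hnext.comap_le le_rfl).aestronglyMeasurable,
    integral_sub (integrable_ladderUp hmeas _) (integrable_const p), ladderUp_succ,
    integral_indicator_one (measurableSet_eq_fun (hmeas _) measurable_const), measureReal_def,
    hprob, ENNReal.toReal_ofReal hp, integral_const, probReal_univ, one_smul, sub_self, mul_zero]

end Probability

section OptionalStopping

variable {ξ : ℕ → Ω → ℤ} {L U x : ℤ} {P : Measure Ω} [IsProbabilityMeasure P] {p : ℝ}

lemma integral_ladderMartingale_comp_ladderTau (hp : 0 ≤ p) (hmeas : ∀ i, Measurable (ξ i))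
    (hindep : iIndepFun ξ P) (hval : ∀ n ω, ξ n ω = 1 ∨ ξ n ω = -1)
    (hprob : ∀ n, 1 ≤ n → P {ω | ξ n ω = 1} = ENNReal.ofReal p) (n : ℕ) :
    ∫ ω, ladderMartingale p ξ (ladderTau ξ L U x n ω) ω ∂P = 0 := by
  induction n with
  | zero => simp [ladderTau_zero, ladderMartingale_zero]
  | succ n ih =>
    have hpast : ∀ i ≤ n, Measurable[MeasurableSpace.comap
        (fun ω (i : Finset.range (n + 1)) => ξ i ω) inferInstance] (ξ i) :=
      fun i hi => measurable_comap_restrict ξ _ (Finset.mem_range.2 (Nat.lt_succ_of_le hi))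
    have hincr : ∀ ω, (ladderAlive ξ L U x n).indicator
          (fun ω => ladderMartingale p ξ (n + 1) ω - ladderMartingale p ξ n ω) ω
        = (ladderAlive ξ L U x n).indicator (fun ω => 2 + p + ladderUp ξ n ω) ω
          * (ladderUp ξ (n + 1) ω - p) := fun ω => by
      simp only [Set.indicator_apply, ladderMartingale_succ_sub p (hval (n + 1) ω)]
      split_ifs <;> ring
    rw [integral_comp_ladderTau_succ hmeas (integrable_ladderMartingale hmeas p) n, ih, zero_add,
      integral_congr_ae (ae_of_all _ hincr)]
    exact integral_mul_ladderUp_sub_eq_zero hp hmeas hindep (hprob _ n.succ_pos)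
      ((measurable_const.add (measurable_ladderUp (hpast n le_rfl))).indicator
        (measurableSet_ladderAlive hpast))

lemma mul_integral_ladderTau (hp : 0 ≤ p) (hmeas : ∀ i, Measurable (ξ i))
    (hindep : iIndepFun ξ P) (hval : ∀ n ω, ξ n ω = 1 ∨ ξ n ω = -1)
    (hprob : ∀ n, 1 ≤ n → P {ω | ξ n ω = 1} = ENNReal.ofReal p) (n : ℕ) :
    (p ^ 2 + 2 * p - 1) * ∫ ω, (ladderTau ξ L U x n ω : ℝ) ∂P
      = ∫ ω, (ladderS ξ (ladderTau ξ L U x n ω) ω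
          + p * ladderUp ξ (ladderTau ξ L U x n ω) ω) ∂P := by
  have hstopped := integrable_comp_ladderTau (L := L) (U := U) (x := x)
    (f := fun k ω => (ladderS ξ k ω : ℝ) + p * ladderUp ξ k ω) hmeas
    (fun k => (integrable_ladderS hmeas k).add
      ((integrable_ladderUp (P := P) hmeas k).const_mul p)) n
  have htau := integrable_comp_ladderTau (L := L) (U := U) (x := x) hmeas
    (fun k => integrable_const (k : ℝ) (μ := P)) n
  have h0 := integral_ladderMartingale_comp_ladderTau (L := L) (U := U) (x := x) hp hmeas
    hindep hval hprob n
  simp only [ladderMartingale] at h0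
  rw [integral_sub hstopped (htau.const_mul _), integral_const_mul, sub_eq_zero] at h0
  exact h0.symm

lemma abs_mul_integral_ladderTau_le (hp : 0 ≤ p) (hmeas : ∀ i, Measurable (ξ i))
    (hindep : iIndepFun ξ P) (hval : ∀ n ω, ξ n ω = 1 ∨ ξ n ω = -1)
    (hprob : ∀ n, 1 ≤ n → P {ω | ξ n ω = 1} = ENNReal.ofReal p)
    (hxL : L ≤ x) (hxU : x ≤ U) (n : ℕ) :
    |p ^ 2 + 2 * p - 1| * ∫ ω, (ladderTau ξ L U x n ω : ℝ) ∂P ≤ (U - L : ℝ) + p := by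
  have hpt : ∀ ω, ‖(ladderS ξ (ladderTau ξ L U x n ω) ω : ℝ)
      + p * ladderUp ξ (ladderTau ξ L U x n ω) ω‖ ≤ (U - L : ℝ) + p := fun ω => by
    obtain ⟨hlo, hhi⟩ := ladderS_ladderTau_bounds (ξ := ξ) hxL hxU n ω
    have hlo' : (L - x : ℝ) ≤ ladderS ξ (ladderTau ξ L U x n ω) ω := by exact_mod_cast hlo
    have hhi' : (ladderS ξ (ladderTau ξ L U x n ω) ω : ℝ) ≤ U - L := by exact_mod_cast hhi
    have hxU' : (x : ℝ) ≤ U := by exact_mod_cast hxU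
    rw [Real.norm_eq_abs, abs_le]
    rcases ladderUp_mem (ξ := ξ) (ladderTau ξ L U x n ω) ω with h | h <;> rw [h] <;>
      constructor <;> linarith
  calc |p ^ 2 + 2 * p - 1| * ∫ ω, (ladderTau ξ L U x n ω : ℝ) ∂P
      = ‖(p ^ 2 + 2 * p - 1) * ∫ ω, (ladderTau ξ L U x n ω : ℝ) ∂P‖ := by
        rw [Real.norm_eq_abs, abs_mul, abs_of_nonneg (integral_nonneg fun ω => Nat.cast_nonneg _)]
    _ ≤ ((U - L : ℝ) + p) * P.real Set.univ := by
        rw [mul_integral_ladderTau hp hmeas hindep hval hprob n]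
        exact norm_integral_le_of_norm_le_const (ae_of_all _ hpt)
    _ = (U - L : ℝ) + p := by rw [probReal_univ, mul_one]

end OptionalStopping

lemma sq_add_two_mul_sub_one_ne_zero {p : ℝ} (hp : 0 ≤ p) (hpc : p ≠ Real.sqrt 2 - 1) :
    p ^ 2 + 2 * p - 1 ≠ 0 := by
  intro h
  apply hpc
  rw [show (2 : ℝ) = (p + 1) ^ 2 by linear_combination -h, Real.sqrt_sq (by linarith)]
  ring

theorem ladder_mean_duration_bound_noncritical_general (p q : ℝ) (hp0 : 0 < p) (hq : q = 1 - p)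
    (hpc : p ≠ Real.sqrt 2 - 1)
    (P : Measure Ω) [IsProbabilityMeasure P]
    (ξ : ℕ → Ω → ℤ) (hmeas : ∀ n, Measurable (ξ n))
    (hindep : iIndepFun ξ P)
    (hval : ∀ n ω, ξ n ω = 1 ∨ ξ n ω = -1)
    (hprob : ∀ n, 1 ≤ n → P {ω | ξ n ω = 1} = ENNReal.ofReal p)
    (L U : ℤ) (n : ℕ)
    (x : ℤ) (hxL : L ≤ x) (hxU : x ≤ U) :
    (∫ ω, (ladderTau ξ L U x n ω : ℝ) ∂P)
      ≤ 1 + (2 * max |(L : ℝ)| |(U : ℝ)| + 2 * |p - q| + |2 * p - q|)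
            / |p ^ 2 + 2 * p - 1| := by
  subst hq
  have hμ : 0 < |p ^ 2 + 2 * p - 1| := abs_pos.2 (sq_add_two_mul_sub_one_ne_zero hp0.le hpc)
  have hbound := abs_mul_integral_ladderTau_le hp0.le hmeas hindep hval hprob hxL hxU n
  have hUL : (U - L : ℝ) ≤ 2 * max |(L : ℝ)| |(U : ℝ)| := by
    linarith [le_abs_self (U : ℝ), neg_le_abs (L : ℝ), le_max_left |(L : ℝ)| |(U : ℝ)|,
      le_max_right |(L : ℝ)| |(U : ℝ)|]
  -- `2|p - q| + |2p - q| ≥ 2(1 - 2p) + (3p - 1) = 1 - p` and `|μ| ≥ μ ≥ 2p - 1`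
  have hp : p ≤ |p ^ 2 + 2 * p - 1| + 2 * |p - (1 - p)| + |2 * p - (1 - p)| := by
    linarith [le_abs_self (p ^ 2 + 2 * p - 1), neg_le_abs (p - (1 - p)),
      le_abs_self (2 * p - (1 - p)), sq_nonneg p]
  rw [one_add_div hμ.ne', le_div_iff₀ hμ]
  linarith

/-- If `p ≠ √2 - 1` (equivalently `p² + 2p - 1 ≠ 0`), then
`E[τ_n^x] ≤ 1 + (2·max(|L|,|U|) + 2|p-q| + |2p-q|) / |p² + 2p - 1|`. -/
theorem ladder_mean_duration_bound_noncritical (p q : ℝ) (hp0 : 0 < p) (hp1 : p < 1) (hq : q = 1 - p)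
    (hpc : p ≠ Real.sqrt 2 - 1)
    (P : Measure Ω) [IsProbabilityMeasure P]
    (ξ : ℕ → Ω → ℤ) (hmeas : ∀ n, Measurable (ξ n))
    (hindep : iIndepFun ξ P)
    (hval : ∀ n ω, ξ n ω = 1 ∨ ξ n ω = -1)
    (hprob : ∀ n, 1 ≤ n → P {ω | ξ n ω = 1} = ENNReal.ofReal p)
    (L U : ℤ) (hLU : U - L ≥ 4) (n : ℕ) (hn : 1 ≤ n)
    (x : ℤ) (hxL : L ≤ x) (hxU : x ≤ U) :
    (∫ ω, (ladderTau ξ L U x n ω : ℝ) ∂P)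
      ≤ 1 + (2 * max |(L : ℝ)| |(U : ℝ)| + 2 * |p - q| + |2 * p - q|)
            / |p ^ 2 + 2 * p - 1| :=
  ladder_mean_duration_bound_noncritical_general p q hp0 hq hpc P ξ hmeas hindep hval hprob L U n x
    hxL hxU
end
end

section
/- Suppose p = √2−1, and let T = inf{n ≥ 1 : S_n = 0}. Then P(ξ_1 = −1 and T < ∞) = q. -/
open MeasureTheory ProbabilityTheory Filter
open scoped ENNReal Classical

noncomputable section

variable {Ω : Type*} [MeasurableSpace Ω]

/-!
Run the chain on states `(position, last letter)`. Because `p ^ 2 + 2 * p = 1`, the position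
plus `p` times the indicator that the last letter was `1` is a martingale. Down-steps have size
one, so a path that never returns to `0` either stays negative forever or stays `≥ 1` from some
time on. Both events are null. Stopped on leaving a window of width `L`, the chain is still
inside after `L * k` steps with probability at most `(1 - (1 - p) ^ L) ^ k`, since `L`
consecutive down-steps leave the window; and by optional stopping for the martingale, it leaves
through the side away from `0` with probability `O(1 / L)`.
-/

namespace LadderChain

open Set

def step (c : ℤ × ℤ) (a : ℤ) : ℤ × ℤ :=
  (c.1 + if a = 1 then (if c.2 = 1 then 2 else 1) else -1, a)

def stoppedStep (A : Set (ℤ × ℤ)) (c : ℤ × ℤ) (a : ℤ) : ℤ × ℤ :=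
  if c ∈ A then step c a else c

/-- `(transOp p A ^ n) f c` is the mean of `f` after `n` steps of the chain started at `c` and
frozen outside `A` (`measureReal_stoppedWalk_mem`). -/
def transOp (p : ℝ) (A : Set (ℤ × ℤ)) : Module.End ℝ (ℤ × ℤ → ℝ) where
  toFun f c := p * f (stoppedStep A c 1) + (1 - p) * f (stoppedStep A c (-1))
  map_add' f g := by ext c; simp only [Pi.add_apply]; ring
  map_smul' b f := by ext c; simp only [Pi.smul_apply, smul_eq_mul, RingHom.id_apply]; ring

def window (lo : ℤ) (L : ℕ) : Set (ℤ × ℤ) := Prod.fst ⁻¹' Ioo lo (lo + L)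

def mart (p : ℝ) (c : ℤ × ℤ) : ℝ := c.1 + if c.2 = 1 then p else 0

section Operator

variable {p : ℝ} {A : Set (ℤ × ℤ)}

@[simp] lemma transOp_apply (f : ℤ × ℤ → ℝ) (c : ℤ × ℤ) :
    transOp p A f c = p * f (stoppedStep A c 1) + (1 - p) * f (stoppedStep A c (-1)) := rfl

lemma transOp_pow_succ_apply (n : ℕ) (f : ℤ × ℤ → ℝ) (c : ℤ × ℤ) :
    (transOp p A ^ (n + 1)) f c = p * (transOp p A ^ n) f (stoppedStep A c 1)
      + (1 - p) * (transOp p A ^ n) f (stoppedStep A c (-1)) := by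
  rw [pow_succ', Module.End.mul_apply, transOp_apply]

lemma transOp_pow_apply_of_notMem {c : ℤ × ℤ} (hc : c ∉ A) (n : ℕ) (f : ℤ × ℤ → ℝ) :
    (transOp p A ^ n) f c = f c := by
  induction n with
  | zero => rfl
  | succ n ih => simp only [transOp_pow_succ_apply, stoppedStep, if_neg hc, ih]; ring

lemma transOp_pow_const (n : ℕ) (b : ℝ) : (transOp p A ^ n) (fun _ => b) = fun _ => b := by
  induction n with
  | zero => rfl
  | succ n ih => ext c; rw [transOp_pow_succ_apply, ih]; ring

lemma transOp_pow_mono (hp0 : 0 ≤ p) (hp1 : p ≤ 1) {f g : ℤ × ℤ → ℝ} (hfg : f ≤ g) (n : ℕ) :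
    (transOp p A ^ n) f ≤ (transOp p A ^ n) g := by
  induction n with
  | zero => exact hfg
  | succ n ih =>
    intro c
    simp only [transOp_pow_succ_apply]
    exact add_le_add (mul_le_mul_of_nonneg_left (ih _) hp0)
      (mul_le_mul_of_nonneg_left (ih _) (sub_nonneg.2 hp1))

lemma transOp_pow_indicator_le_one (hp0 : 0 ≤ p) (hp1 : p ≤ 1) (s : Set (ℤ × ℤ)) (n : ℕ)
    (c : ℤ × ℤ) : (transOp p A ^ n) (s.indicator 1) c ≤ 1 := by
  have := transOp_pow_mono hp0 hp1 (A := A)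
    (Set.indicator_le_self' (s := s) (f := fun _ => (1 : ℝ)) fun _ _ => zero_le_one) n c
  rwa [transOp_pow_const] at this

lemma transOp_pow_le_of_harmonic (hp0 : 0 ≤ p) (hp1 : p ≤ 1) {I : Set (ℤ × ℤ)}
    (hI : ∀ c ∈ I, stoppedStep A c 1 ∈ I ∧ stoppedStep A c (-1) ∈ I)
    {f g : ℤ × ℤ → ℝ} (hg : transOp p A g = g) (hfg : ∀ c ∈ I, f c ≤ g c) (n : ℕ) :
    ∀ c ∈ I, (transOp p A ^ n) f c ≤ g c := by
  induction n with
  | zero => exact hfg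
  | succ n ih =>
    intro c hc
    calc (transOp p A ^ (n + 1)) f c ≤ transOp p A g c := by
          rw [transOp_pow_succ_apply, transOp_apply]
          exact add_le_add (mul_le_mul_of_nonneg_left (ih _ (hI c hc).1) hp0)
            (mul_le_mul_of_nonneg_left (ih _ (hI c hc).2) (sub_nonneg.2 hp1))
      _ = g c := congrFun hg c

lemma transOp_affine_mart (hpsq : p ^ 2 + 2 * p = 1) (a b : ℝ) :
    transOp p A (fun d => a + b * mart p d) = fun d => a + b * mart p d := by
  ext c
  simp only [transOp_apply, stoppedStep]
  split_ifs
  · simp only [step, mart, if_true, show (-1 : ℤ) ≠ 1 by decide, if_false]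
    split_ifs <;> push_cast <;> linear_combination b * hpsq
  · ring

lemma mart_bounds (hp0 : 0 ≤ p) (c : ℤ × ℤ) : (c.1 : ℝ) ≤ mart p c ∧ mart p c ≤ c.1 + p := by
  unfold mart; split_ifs <;> constructor <;> linarith

end Operator

section Window

variable {p : ℝ} {lo : ℤ} {L : ℕ}

lemma stoppedStep_window_mem_Icc :
    ∀ c ∈ Prod.fst ⁻¹' Icc lo (lo + L + 1),
      stoppedStep (window lo L) c 1 ∈ Prod.fst ⁻¹' Icc lo (lo + L + 1) ∧
      stoppedStep (window lo L) c (-1) ∈ Prod.fst ⁻¹' Icc lo (lo + L + 1) := by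
  intro c hc
  simp only [stoppedStep, step, window, mem_preimage, mem_Icc, mem_Ioo] at hc ⊢
  split_ifs <;> omega

lemma transOp_pow_exit_below (hp0 : 0 ≤ p) (hp1 : p ≤ 1) (hpsq : p ^ 2 + 2 * p = 1) (n : ℕ)
    {c : ℤ × ℤ} (hc : c.1 ∈ Icc lo (lo + L + 1)) :
    (L + 1 : ℝ) * (transOp p (window lo L) ^ n) ((Prod.fst ⁻¹' Iic lo).indicator 1) c
      ≤ lo + L + 1 + p - mart p c := by
  have h := transOp_pow_le_of_harmonic hp0 hp1 stoppedStep_window_mem_Icc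
    (transOp_affine_mart hpsq (lo + L + 1 + p) (-1))
    (f := (L + 1 : ℝ) • (Prod.fst ⁻¹' Iic lo).indicator 1) ?_ n c hc
  · simpa [map_smul, sub_eq_add_neg] using h
  · intro d hd
    obtain ⟨hm1, hm2⟩ := mart_bounds hp0 d
    have hd' : (lo : ℝ) ≤ d.1 ∧ (d.1 : ℝ) ≤ lo + L + 1 := by exact_mod_cast hd
    rw [Pi.smul_apply, smul_eq_mul, indicator_apply]
    split_ifs with hlo
    · have : (d.1 : ℝ) ≤ lo := by exact_mod_cast (hlo : d.1 ≤ lo)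
      rw [Pi.one_apply]; linarith
    · linarith

lemma transOp_pow_exit_above (hp0 : 0 ≤ p) (hp1 : p ≤ 1) (hpsq : p ^ 2 + 2 * p = 1) (n : ℕ)
    {c : ℤ × ℤ} (hc : c.1 ∈ Icc lo (lo + L + 1)) :
    (L : ℝ) * (transOp p (window lo L) ^ n) ((Prod.fst ⁻¹' Ici (lo + L)).indicator 1) c
      ≤ mart p c - lo := by
  have h := transOp_pow_le_of_harmonic hp0 hp1 stoppedStep_window_mem_Icc
    (transOp_affine_mart hpsq (-lo) 1)
    (f := (L : ℝ) • (Prod.fst ⁻¹' Ici (lo + L)).indicator 1) ?_ n c hc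
  · simpa [map_smul, sub_eq_add_neg, add_comm] using h
  · intro d hd
    obtain ⟨hm1, hm2⟩ := mart_bounds hp0 d
    have hd' : (lo : ℝ) ≤ d.1 := by exact_mod_cast hd.1
    rw [Pi.smul_apply, smul_eq_mul, indicator_apply]
    split_ifs with hhi
    · have : (lo : ℝ) + L ≤ d.1 := by exact_mod_cast (hhi : lo + L ≤ d.1)
      rw [Pi.one_apply]; linarith
    · linarith

lemma transOp_pow_window_le (hp0 : 0 ≤ p) (hp1 : p ≤ 1) (j : ℕ) :
    ∀ c, (c ∈ window lo L → c.1 < lo + j) →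
      (transOp p (window lo L) ^ j) ((window lo L).indicator 1) c ≤ 1 - (1 - p) ^ j := by
  induction j with
  | zero =>
    intro c hc
    by_cases hw : c ∈ window lo L
    · simp only [window, mem_preimage, mem_Ioo] at hw
      have := hc hw; omega
    · simp [hw]
  | succ j ih =>
    intro c hc
    by_cases hw : c ∈ window lo L
    · have hup := transOp_pow_indicator_le_one hp0 hp1 (A := window lo L) (window lo L) j
        (stoppedStep (window lo L) c 1)
      have hdown := ih (stoppedStep (window lo L) c (-1)) (by
        have := hc hw
        rw [stoppedStep, if_pos hw]
        simp only [step, window, mem_preimage, mem_Ioo] at this ⊢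
        omega)
      rw [transOp_pow_succ_apply, pow_succ]
      nlinarith [mul_le_mul_of_nonneg_left hup hp0,
        mul_le_mul_of_nonneg_left hdown (sub_nonneg.2 hp1)]
    · rw [transOp_pow_apply_of_notMem hw]
      simp only [indicator_of_notMem hw, sub_nonneg]
      exact pow_le_one₀ (by linarith) (by linarith)

lemma transOp_pow_window_decay (hp0 : 0 ≤ p) (hp1 : p ≤ 1) (k : ℕ) (c : ℤ × ℤ) :
    (transOp p (window lo L) ^ (L * k)) ((window lo L).indicator 1) c
      ≤ (1 - (1 - p) ^ L) ^ k := by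
  set T := transOp p (window lo L)
  set r := 1 - (1 - p) ^ L
  have hr0 : 0 ≤ r := sub_nonneg.2 (pow_le_one₀ (by linarith) (by linarith))
  induction k generalizing c with
  | zero => by_cases hc : c ∈ window lo L <;> simp [hc]
  | succ k ih =>
    have hle : (T ^ (L * k)) ((window lo L).indicator 1) ≤ r ^ k • (window lo L).indicator 1 := by
      intro d
      by_cases hd : d ∈ window lo L
      · simpa [hd] using ih d
      · simp [T, transOp_pow_apply_of_notMem hd, hd]
    calc (T ^ (L * (k + 1))) ((window lo L).indicator 1) c
        = (T ^ L) ((T ^ (L * k)) ((window lo L).indicator 1)) c := by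
          rw [show L * (k + 1) = L + L * k by ring, pow_add, Module.End.mul_apply]
      _ ≤ (T ^ L) (r ^ k • (window lo L).indicator 1) c := transOp_pow_mono hp0 hp1 hle L c
      _ = r ^ k * (T ^ L) ((window lo L).indicator 1) c := by rw [map_smul]; rfl
      _ ≤ r ^ k * r :=
          mul_le_mul_of_nonneg_left (transOp_pow_window_le hp0 hp1 L c fun hc => hc.2)
            (pow_nonneg hr0 k)
      _ = r ^ (k + 1) := (pow_succ r k).symm

end Window

section Walk

variable {α : Type*} {ξ : ℕ → α → ℤ} {A : Set (ℤ × ℤ)}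

/-- The walk started in state `c` at time `m`, driven by `ξ (m + 1), …, ξ (m + n)`. -/
def stoppedWalk (A : Set (ℤ × ℤ)) (ξ : ℕ → α → ℤ) : ℕ → ℕ → ℤ × ℤ → α → ℤ × ℤ
  | 0, _, c, _ => c
  | n + 1, m, c, ω => stoppedWalk A ξ n (m + 1) (stoppedStep A c (ξ (m + 1) ω)) ω

lemma stoppedWalk_succ' (n m : ℕ) (c : ℤ × ℤ) (ω : α) :
    stoppedWalk A ξ (n + 1) m c ω
      = stoppedStep A (stoppedWalk A ξ n m c ω) (ξ (m + n + 1) ω) := by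
  induction n generalizing m c with
  | zero => rfl
  | succ n ih => rw [stoppedWalk, ih, stoppedWalk, Nat.add_right_comm m 1 n]; rfl

lemma setOf_stoppedWalk_succ_mem (hval : ∀ n ω, ξ n ω = 1 ∨ ξ n ω = -1) (n m : ℕ)
    (c : ℤ × ℤ) (B : Set (ℤ × ℤ)) :
    {ω | stoppedWalk A ξ (n + 1) m c ω ∈ B} =
      {ω | ξ (m + 1) ω = 1} ∩ {ω | stoppedWalk A ξ n (m + 1) (stoppedStep A c 1) ω ∈ B} ∪
      {ω | ξ (m + 1) ω = -1} ∩ {ω | stoppedWalk A ξ n (m + 1) (stoppedStep A c (-1)) ω ∈ B} := by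
  ext ω
  rcases hval (m + 1) ω with h | h <;> simp [stoppedWalk, h]

lemma measurableSet_stoppedWalk_mem (hval : ∀ n ω, ξ n ω = 1 ∨ ξ n ω = -1) (n m : ℕ)
    (c : ℤ × ℤ) (B : Set (ℤ × ℤ)) :
    MeasurableSet[⨆ i ∈ Ioi m, MeasurableSpace.comap (ξ i) inferInstance]
      {ω | stoppedWalk A ξ n m c ω ∈ B} := by
  induction n generalizing m c with
  | zero => simp only [stoppedWalk]; exact MeasurableSet.const _
  | succ n ih =>
    have hletter (v : ℤ) : MeasurableSet[⨆ i ∈ Ioi m, MeasurableSpace.comap (ξ i) inferInstance]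
        {ω | ξ (m + 1) ω = v} :=
      le_biSup (fun i => MeasurableSpace.comap (ξ i) inferInstance) (lt_add_one m) _
        (comap_measurable (ξ (m + 1)) (measurableSet_singleton v))
    have hrest (c' : ℤ × ℤ) : MeasurableSet[⨆ i ∈ Ioi m, MeasurableSpace.comap (ξ i) inferInstance]
        {ω | stoppedWalk A ξ n (m + 1) c' ω ∈ B} :=
      biSup_mono (f := fun i => MeasurableSpace.comap (ξ i) inferInstance)
        (fun i (hi : m + 1 < i) => (Nat.lt_of_succ_lt hi : m < i)) _ (ih (m + 1) c')
    rw [setOf_stoppedWalk_succ_mem hval]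
    exact ((hletter 1).inter (hrest _)).union ((hletter (-1)).inter (hrest _))

end Walk

section Probability

structure IsBernoulliSigns (P : Measure Ω) (p : ℝ) (ξ : ℕ → Ω → ℤ) : Prop where
  measurable : ∀ n, Measurable (ξ n)
  iIndepFun : iIndepFun ξ P
  eq_one_or_eq_neg_one : ∀ n ω, ξ n ω = 1 ∨ ξ n ω = -1
  measure_eq_one : ∀ n, 1 ≤ n → P {ω | ξ n ω = 1} = ENNReal.ofReal p

variable {P : Measure Ω} {p : ℝ} {ξ : ℕ → Ω → ℤ} {A : Set (ℤ × ℤ)}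

lemma IsBernoulliSigns.measureReal_eq_one [IsProbabilityMeasure P] (hξ : IsBernoulliSigns P p ξ)
    (hp0 : 0 ≤ p) {n : ℕ} (hn : 1 ≤ n) : P.real {ω | ξ n ω = 1} = p := by
  rw [measureReal_def, hξ.measure_eq_one n hn, ENNReal.toReal_ofReal hp0]

lemma IsBernoulliSigns.measureReal_eq_neg_one [IsProbabilityMeasure P]
    (hξ : IsBernoulliSigns P p ξ) (hp0 : 0 ≤ p) {n : ℕ} (hn : 1 ≤ n) :
    P.real {ω | ξ n ω = -1} = 1 - p := by
  have hcompl : {ω | ξ n ω = -1} = {ω | ξ n ω = 1}ᶜ := by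
    ext ω; rcases hξ.eq_one_or_eq_neg_one n ω with h | h <;> simp [h]
  have hmeas : MeasurableSet {ω | ξ n ω = 1} := hξ.measurable n (measurableSet_singleton 1)
  rw [hcompl, probReal_compl_eq_one_sub hmeas, hξ.measureReal_eq_one hp0 hn]

lemma measureReal_letter_inter_stoppedWalk_mem (hξ : IsBernoulliSigns P p ξ) (v : ℤ) (n m : ℕ)
    (c : ℤ × ℤ) (B : Set (ℤ × ℤ)) :
    P.real ({ω | ξ (m + 1) ω = v} ∩ {ω | stoppedWalk A ξ n (m + 1) c ω ∈ B}) =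
      P.real {ω | ξ (m + 1) ω = v} * P.real {ω | stoppedWalk A ξ n (m + 1) c ω ∈ B} := by
  have hindep := indep_iSup_of_disjoint (fun i => (hξ.measurable i).comap_le)
    hξ.iIndepFun.iIndep (S := {m + 1}) (T := Ioi (m + 1)) (by simp)
  rw [measureReal_def, measureReal_def, measureReal_def, ← ENNReal.toReal_mul]
  congr 1
  refine (Indep_iff _ _ _).1 hindep _ _ ?_
    (measurableSet_stoppedWalk_mem hξ.eq_one_or_eq_neg_one n (m + 1) c B)
  exact le_biSup (fun i => MeasurableSpace.comap (ξ i) inferInstance) (mem_singleton (m + 1)) _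
    (comap_measurable (ξ (m + 1)) (measurableSet_singleton v))

lemma measureReal_stoppedWalk_mem [IsProbabilityMeasure P] (hξ : IsBernoulliSigns P p ξ)
    (hp0 : 0 ≤ p) (n m : ℕ) (c : ℤ × ℤ) (B : Set (ℤ × ℤ)) :
    P.real {ω | stoppedWalk A ξ n m c ω ∈ B} = (transOp p A ^ n) (B.indicator 1) c := by
  induction n generalizing m c with
  | zero => by_cases hc : c ∈ B <;> simp [stoppedWalk, hc]
  | succ n ih =>
    have hdisj : Disjoint {ω | ξ (m + 1) ω = 1} {ω | ξ (m + 1) ω = -1} :=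
      disjoint_left.2 fun ω h1 h2 => by simp_all
    have hmeas : MeasurableSet ({ω | ξ (m + 1) ω = -1}
        ∩ {ω | stoppedWalk A ξ n (m + 1) (stoppedStep A c (-1)) ω ∈ B}) :=
      (hξ.measurable _ (measurableSet_singleton _)).inter
        (iSup₂_le (fun i _ => (hξ.measurable i).comap_le) _
          (measurableSet_stoppedWalk_mem hξ.eq_one_or_eq_neg_one n (m + 1) _ B))
    rw [setOf_stoppedWalk_succ_mem hξ.eq_one_or_eq_neg_one,
      measureReal_union (μ := P) (hdisj.mono inter_subset_left inter_subset_left) hmeas,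
      measureReal_letter_inter_stoppedWalk_mem hξ, measureReal_letter_inter_stoppedWalk_mem hξ,
      ih, ih, hξ.measureReal_eq_one hp0 (Nat.le_add_left 1 m),
      hξ.measureReal_eq_neg_one hp0 (Nat.le_add_left 1 m), transOp_pow_succ_apply]

end Probability

section Ladder

variable {α : Type*} {ξ : ℕ → α → ℤ}

/-- The convention `ξ₀ = -1` lets `X₁` follow the rule of the later steps. -/
def state (ξ : ℕ → α → ℤ) (n : ℕ) (ω : α) : ℤ × ℤ :=
  (ladderS ξ n ω, if n = 0 then -1 else ξ n ω)

lemma ladderS_succ (n : ℕ) (ω : α) : ladderS ξ (n + 1) ω = ladderS ξ n ω + ladderX ξ (n + 1) ω :=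
  Finset.sum_Icc_succ_top (Nat.le_add_left 1 n) _

lemma state_succ (hval : ∀ n ω, ξ n ω = 1 ∨ ξ n ω = -1) (n : ℕ) (ω : α) :
    state ξ (n + 1) ω = step (state ξ n ω) (ξ (n + 1) ω) := by
  rcases eq_or_ne n 0 with rfl | hn
  · rcases hval 1 ω with h | h <;> simp [state, step, ladderS_succ, ladderX, h]
  · rcases hval (n + 1) ω with h | h <;> simp [state, step, ladderS_succ, ladderX, h, hn]

lemma exists_stoppedWalk_state_eq (hval : ∀ n ω, ξ n ω = 1 ∨ ξ n ω = -1) (A : Set (ℤ × ℤ))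
    (n m : ℕ) (ω : α) : ∃ i, stoppedWalk A ξ n m (state ξ m ω) ω = state ξ (m + i) ω := by
  suffices ∃ i, stoppedWalk A ξ n m (state ξ m ω) ω = state ξ (m + i) ω ∧
      (i = n ∨ state ξ (m + i) ω ∉ A) from this.imp fun _ h => h.1
  induction n with
  | zero => exact ⟨0, rfl, Or.inl rfl⟩
  | succ n ih =>
    obtain ⟨i, hi, rfl | hout⟩ := ih
    · by_cases hA : state ξ (m + i) ω ∈ A
      · refine ⟨i + 1, ?_, Or.inl rfl⟩
        rw [stoppedWalk_succ', hi, stoppedStep, if_pos hA, ← state_succ hval]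
        rfl
      · exact ⟨i, by rw [stoppedWalk_succ', hi, stoppedStep, if_neg hA], Or.inr hA⟩
    · exact ⟨i, by rw [stoppedWalk_succ', hi, stoppedStep, if_neg hout], Or.inr hout⟩

lemma ladderS_sub_one_le (n : ℕ) (ω : α) : ladderS ξ n ω - 1 ≤ ladderS ξ (n + 1) ω := by
  rw [ladderS_succ, ladderX]
  split_ifs <;> omega

lemma ladderS_neg_or_eventually_pos {ω : α} (hne : ∀ n, 1 ≤ n → ladderS ξ n ω ≠ 0) :
    (∀ n, 1 ≤ n → ladderS ξ n ω < 0) ∨ ∃ m, ∀ n, m ≤ n → 1 ≤ ladderS ξ n ω := by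
  by_cases hneg : ∀ n, 1 ≤ n → ladderS ξ n ω < 0
  · exact Or.inl hneg
  push Not at hneg
  obtain ⟨m, hm1, hm0⟩ := hneg
  refine Or.inr ⟨m, fun n hn => ?_⟩
  induction n, hn using Nat.le_induction with
  | base => have := hne m hm1; omega
  | succ n hmn ih =>
    have := ladderS_sub_one_le (ξ := ξ) n ω
    have := hne (n + 1) (by omega)
    omega

end Ladder

section Recurrence

variable {P : Measure Ω} [IsProbabilityMeasure P] {p : ℝ} {ξ : ℕ → Ω → ℤ}

lemma measure_stays_eq_zero (hξ : IsBernoulliSigns P p ξ) (hp0 : 0 ≤ p) (hp1 : p < 1)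
    {H : Set (ℤ × ℤ)} (m : ℕ) (c : ℤ × ℤ)
    (hexit : c ∈ H → ∀ ε > 0, ∃ (lo : ℤ) (L : ℕ), ∀ n,
      (transOp p (window lo L) ^ n) ((H \ window lo L).indicator 1) c ≤ ε) :
    P {ω | state ξ m ω = c ∧ ∀ i, state ξ (m + i) ω ∈ H} = 0 := by
  set E := {ω | state ξ m ω = c ∧ ∀ i, state ξ (m + i) ω ∈ H}
  by_cases hc : c ∈ H
  swap
  · refine measure_mono_null (fun ω hω => hc ?_) measure_empty
    simpa [hω.1] using hω.2 0
  rw [← measureReal_eq_zero_iff]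
  refine le_antisymm (le_of_forall_pos_le_add fun ε hε => ?_) measureReal_nonneg
  obtain ⟨lo, L, hL⟩ := hexit hc ε hε
  set W := window lo L
  set r := 1 - (1 - p) ^ L
  have hbound (k : ℕ) : P.real E ≤ r ^ k + ε := by
    have hsub : E ⊆ {ω | stoppedWalk W ξ (L * k) m c ω ∈ W}
        ∪ {ω | stoppedWalk W ξ (L * k) m c ω ∈ H \ W} := by
      rintro ω ⟨hm, hH⟩
      obtain ⟨i, hi⟩ := exists_stoppedWalk_state_eq hξ.eq_one_or_eq_neg_one W (L * k) m ω
      rw [hm] at hi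
      by_cases hw : state ξ (m + i) ω ∈ W
      · exact Or.inl (by simpa [hi] using hw)
      · exact Or.inr (by simpa [hi] using ⟨hH i, hw⟩)
    calc P.real E ≤ P.real ({ω | stoppedWalk W ξ (L * k) m c ω ∈ W}
          ∪ {ω | stoppedWalk W ξ (L * k) m c ω ∈ H \ W}) := measureReal_mono hsub
      _ ≤ _ := measureReal_union_le _ _
      _ ≤ r ^ k + ε := by
        rw [measureReal_stoppedWalk_mem hξ hp0, measureReal_stoppedWalk_mem hξ hp0]
        exact add_le_add (transOp_pow_window_decay hp0 hp1.le k c) (hL _)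
  have hr0 : 0 ≤ r := sub_nonneg.2 (pow_le_one₀ (by linarith) (by linarith))
  have hr1 : r < 1 := sub_lt_self 1 (pow_pos (by linarith) L)
  simpa using ge_of_tendsto' ((tendsto_pow_atTop_nhds_zero_of_lt_one hr0 hr1).add_const ε) hbound

lemma measure_stays_neg_eq_zero (hξ : IsBernoulliSigns P p ξ) (hp0 : 0 ≤ p) (hp1 : p < 1)
    (hpsq : p ^ 2 + 2 * p = 1) (m : ℕ) (c : ℤ × ℤ) :
    P {ω | state ξ m ω = c ∧ ∀ i, state ξ (m + i) ω ∈ Prod.fst ⁻¹' Iio 0} = 0 := by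
  refine measure_stays_eq_zero hξ hp0 hp1 m c fun hc ε hε => ?_
  obtain ⟨N, hNc, hNε⟩ := ((eventually_ge_atTop (-c.1).toNat).and
    (eventually_ge_atTop ⌈(1 + p - mart p c) / ε⌉₊)).exists
  simp only [mem_preimage, mem_Iio] at hc
  refine ⟨-(N : ℤ), N, fun n => ?_⟩
  have hset : Prod.fst ⁻¹' Iio 0 \ window (-N) N = Prod.fst ⁻¹' Iic (-(N : ℤ)) := by
    ext d; simp only [window, Set.mem_sdiff, mem_preimage, mem_Iio, mem_Ioo, mem_Iic]
    constructor <;> intro h <;> omega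
  have hexit := transOp_pow_exit_below hp0 hp1.le hpsq n (lo := -N) (L := N) (c := c)
    ⟨by omega, by omega⟩
  have hN : (1 + p - mart p c) ≤ N * ε :=
    (div_le_iff₀ hε).1 ((Nat.le_ceil _).trans (by exact_mod_cast hNε))
  rw [hset]
  push_cast at hexit
  refine le_of_mul_le_mul_left (a := (N + 1 : ℝ)) ?_ (by positivity)
  nlinarith

lemma measure_stays_pos_eq_zero (hξ : IsBernoulliSigns P p ξ) (hp0 : 0 ≤ p) (hp1 : p < 1)
    (hpsq : p ^ 2 + 2 * p = 1) (m : ℕ) (c : ℤ × ℤ) :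
    P {ω | state ξ m ω = c ∧ ∀ i, state ξ (m + i) ω ∈ Prod.fst ⁻¹' Ici 1} = 0 := by
  refine measure_stays_eq_zero hξ hp0 hp1 m c fun hc ε hε => ?_
  obtain ⟨K, hKc, hKε⟩ := ((eventually_ge_atTop c.1.toNat).and
    (eventually_ge_atTop ⌈mart p c / ε⌉₊)).exists
  simp only [mem_preimage, mem_Ici] at hc
  refine ⟨0, K, fun n => ?_⟩
  have hset : Prod.fst ⁻¹' Ici 1 \ window 0 K = Prod.fst ⁻¹' Ici ((0 : ℤ) + K) := by
    ext d; simp only [window, Set.mem_sdiff, mem_preimage, mem_Ici, mem_Ioo]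
    constructor <;> intro h <;> omega
  have hexit := transOp_pow_exit_above hp0 hp1.le hpsq n (lo := 0) (L := K) (c := c)
    ⟨by omega, by omega⟩
  have hK : mart p c ≤ K * ε :=
    (div_le_iff₀ hε).1 ((Nat.le_ceil _).trans (by exact_mod_cast hKε))
  have hKpos : (0 : ℝ) < K := by exact_mod_cast (show 0 < K by omega)
  rw [hset]
  push_cast at hexit
  refine le_of_mul_le_mul_left (a := (K : ℝ)) ?_ hKpos
  linarith

theorem measure_ladderS_ne_zero_eq_zero (hξ : IsBernoulliSigns P p ξ) (hp0 : 0 ≤ p)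
    (hp1 : p < 1) (hpsq : p ^ 2 + 2 * p = 1) :
    P {ω | ∀ n, 1 ≤ n → ladderS ξ n ω ≠ 0} = 0 := by
  have hsub : {ω | ∀ n, 1 ≤ n → ladderS ξ n ω ≠ 0} ⊆ ⋃ m, ⋃ c,
      ({ω | state ξ m ω = c ∧ ∀ i, state ξ (m + i) ω ∈ Prod.fst ⁻¹' Iio 0} ∪
        {ω | state ξ m ω = c ∧ ∀ i, state ξ (m + i) ω ∈ Prod.fst ⁻¹' Ici 1}) := by
    intro ω hω
    simp only [mem_iUnion]
    rcases ladderS_neg_or_eventually_pos hω with hneg | ⟨m, hpos⟩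
    · exact ⟨1, _, Or.inl ⟨rfl, fun i => hneg (1 + i) (Nat.le_add_right 1 i)⟩⟩
    · exact ⟨m, _, Or.inr ⟨rfl, fun i => hpos (m + i) (Nat.le_add_right m i)⟩⟩
  exact measure_mono_null hsub <| measure_iUnion_null fun m => measure_iUnion_null fun c =>
    measure_union_null (measure_stays_neg_eq_zero hξ hp0 hp1 hpsq m c)
      (measure_stays_pos_eq_zero hξ hp0 hp1 hpsq m c)

end Recurrence

end LadderChain

/-- If `p = √2 - 1` and `T = inf {n ≥ 1 : S_n = 0}`, then
`P(ξ₁ = -1 and T < ∞) = q`. -/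
theorem ladder_return_after_down_step (p q : ℝ) (hp : p = Real.sqrt 2 - 1) (hq : q = 1 - p)
    (P : Measure Ω) [IsProbabilityMeasure P]
    (ξ : ℕ → Ω → ℤ) (hmeas : ∀ n, Measurable (ξ n))
    (hindep : iIndepFun ξ P)
    (hval : ∀ n ω, ξ n ω = 1 ∨ ξ n ω = -1)
    (hprob : ∀ n, 1 ≤ n → P {ω | ξ n ω = 1} = ENNReal.ofReal p) :
    P {ω | ξ 1 ω = -1 ∧ ∃ n, 1 ≤ n ∧ ladderS ξ n ω = 0} = ENNReal.ofReal q := by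
  have hsqrt : Real.sqrt 2 ^ 2 = 2 := Real.sq_sqrt zero_le_two
  have hsqrt1 : 1 < Real.sqrt 2 := by nlinarith [Real.sqrt_nonneg 2]
  have hp0 : 0 ≤ p := by rw [hp]; linarith
  have hp1 : p < 1 := by rw [hp]; nlinarith
  have hpsq : p ^ 2 + 2 * p = 1 := by rw [hp]; nlinarith
  have hξ : LadderChain.IsBernoulliSigns P p ξ := ⟨hmeas, hindep, hval, hprob⟩
  calc P {ω | ξ 1 ω = -1 ∧ ∃ n, 1 ≤ n ∧ ladderS ξ n ω = 0}
      = P ({ω | ξ 1 ω = -1} \ {ω | ∀ n, 1 ≤ n → ladderS ξ n ω ≠ 0}) := by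
        congr 1; ext ω; simp
    _ = P {ω | ξ 1 ω = -1} :=
        measure_sdiff_null (LadderChain.measure_ladderS_ne_zero_eq_zero hξ hp0 hp1 hpsq)
    _ = ENNReal.ofReal q := by
        rw [← ofReal_measureReal, hξ.measureReal_eq_neg_one hp0 le_rfl, hq]

end
end
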